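/- Let X be a p-dimensional random row vector and Y a square-integrable real random variable with positive variance, with Σ_XX positive definite and Σ_XY ≠ 0, γ = √(Σ_YX Σ_XX⁻¹ Σ_XY)/σ_Y, and let Ỹ*(x) = μ_Y + (x−μ_X)·(1/γ)Σ_XX⁻¹Σ_XY be the maximum agreement linear predictor. Then E[Ỹ*(X)] = E[Y] and Var[Ỹ*(X)] = Var[Y]; that is, the MALP has the same mean and the same variance as the predictand. -/

import Mathlib

open MeasureTheory ProbabilityTheory Matrix

/-- Expectation of a real random variable with respect to the ambient measure. -/
noncomputable def pMean {Ω : Type*} [MeasureSpace Ω] (U : Ω → ℝ) : ℝ := ∫ ω, U ω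

/-- Covariance of two real random variables. -/
noncomputable def pCov {Ω : Type*} [MeasureSpace Ω] (U V : Ω → ℝ) : ℝ :=
  ∫ ω, (U ω - pMean U) * (V ω - pMean V)

/-- Variance of a real random variable. -/
noncomputable def pVar {Ω : Type*} [MeasureSpace Ω] (U : Ω → ℝ) : ℝ := pCov U U

/-- Lin's concordance correlation coefficient. -/
noncomputable def CCC {Ω : Type*} [MeasureSpace Ω] (U V : Ω → ℝ) : ℝ :=
  2 * pCov U V / (pVar U + pVar V + (pMean U - pMean V) ^ 2)

/-! The predictor is an affine function `a + (X - μ_X) ⬝ᵥ c` of `X`, so its mean is `a` and its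
variance is the quadratic form `c ⬝ᵥ Σ_XX c`. For `c = γ⁻¹ • Σ_XX⁻¹ Σ_XY` this form equals
`γ⁻² · Σ_YX Σ_XX⁻¹ Σ_XY`, which is `σ_Y²` by the choice of `γ`. -/

section Moments

variable {Ω : Type*} [MeasureSpace Ω]

theorem pCov_eq_covariance (U V : Ω → ℝ) : pCov U V = cov[U, V] := rfl

theorem pVar_nonneg (U : Ω → ℝ) : 0 ≤ pVar U :=
  integral_nonneg fun _ => mul_self_nonneg _

variable [IsProbabilityMeasure (ℙ : Measure Ω)] {ι : Type*} [Fintype ι]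

theorem pMean_const_add_dotProduct_sub (X : Ω → ι → ℝ)
    (hX : ∀ j, Integrable (fun ω => X ω j)) (a : ℝ) (m c : ι → ℝ) :
    pMean (fun ω => a + (X ω - m) ⬝ᵥ c)
      = a + ((fun j => pMean fun ω => X ω j) - m) ⬝ᵥ c := by
  have hterm : ∀ j, Integrable (fun ω => (X ω j - m j) * c j) :=
    fun j => ((hX j).sub (integrable_const _)).mul_const _
  simp only [pMean, dotProduct, Pi.sub_apply]
  rw [integral_add (integrable_const _) (integrable_finsetSum _ fun j _ => hterm j),
    integral_const, probReal_univ, one_smul, integral_finsetSum _ fun j _ => hterm j]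
  congr 1
  refine Finset.sum_congr rfl fun j _ => ?_
  rw [integral_mul_const, integral_sub (hX j) (integrable_const _), integral_const,
    probReal_univ, one_smul]

theorem pVar_const_add_dotProduct_sub (X : Ω → ι → ℝ)
    (hX : ∀ j, MemLp (fun ω => X ω j) 2) (a : ℝ) (m c : ι → ℝ) :
    pVar (fun ω => a + (X ω - m) ⬝ᵥ c)
      = c ⬝ᵥ (Matrix.of (fun j l => pCov (fun ω => X ω j) (fun ω => X ω l)) *ᵥ c) := by
  have hterm : ∀ j, MemLp (fun ω => (X ω j - m j) * c j) 2 :=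
    fun j => ((hX j).sub (memLp_const _)).mul_const _
  have hsum : Integrable (fun ω => ∑ j, (X ω j - m j) * c j) :=
    integrable_finsetSum _ fun j _ => (hterm j).integrable one_le_two
  simp only [pVar, pCov_eq_covariance, dotProduct, Pi.sub_apply]
  rw [covariance_const_add_left hsum, covariance_const_add_right hsum,
    covariance_fun_sum_fun_sum hterm hterm]
  refine Finset.sum_congr rfl fun j _ => ?_
  simp only [mulVec, dotProduct, Matrix.of_apply, Finset.mul_sum]
  refine Finset.sum_congr rfl fun l _ => ?_
  rw [covariance_mul_const_left, covariance_mul_const_right,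
    covariance_sub_const_left ((hX j).integrable one_le_two),
    covariance_sub_const_right ((hX l).integrable one_le_two)]
  ring

end Moments

theorem Matrix.smul_inv_mulVec_dotProduct_mulVec {n : Type*} [Fintype n] [DecidableEq n]
    {A : Matrix n n ℝ} (hA : IsUnit A.det) (s : n → ℝ) (t : ℝ) :
    (t • (A⁻¹ *ᵥ s)) ⬝ᵥ (A *ᵥ (t • (A⁻¹ *ᵥ s))) = t ^ 2 * (s ⬝ᵥ (A⁻¹ *ᵥ s)) := by
  rw [mulVec_smul, mulVec_mulVec, mul_nonsing_inv _ hA, one_mulVec, smul_dotProduct,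
    dotProduct_smul, dotProduct_comm, smul_eq_mul, smul_eq_mul]
  ring

theorem inv_div_sqrt_sq_mul {q v : ℝ} (hq : 0 < q) (hv : 0 ≤ v) :
    (Real.sqrt q / Real.sqrt v)⁻¹ ^ 2 * q = v := by
  rw [inv_pow, div_pow, Real.sq_sqrt hq.le, Real.sq_sqrt hv, inv_div, div_mul_cancel₀ _ hq.ne']

theorem malp_mean_variance_match_general {Ω : Type*} [MeasureSpace Ω]
    [IsProbabilityMeasure (ℙ : Measure Ω)] {p : ℕ}
    (X : Ω → Fin p → ℝ) (Y : Ω → ℝ)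
    (hX : ∀ j, MemLp (fun ω => X ω j) 2 ℙ)
    (μX : Fin p → ℝ) (hμX : μX = fun j => pMean (fun ω => X ω j))
    (μY : ℝ) (hμY : μY = pMean Y)
    (SigXX : Matrix (Fin p) (Fin p) ℝ)
    (hSigXX : SigXX = Matrix.of fun j l => pCov (fun ω => X ω j) (fun ω => X ω l))
    (hPD : SigXX.PosDef)
    (SigXY : Fin p → ℝ)
    (hne : SigXY ≠ 0)
    (γ : ℝ) (hγ : γ = Real.sqrt (SigXY ⬝ᵥ (SigXX⁻¹ *ᵥ SigXY)) / Real.sqrt (pVar Y)) :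
    pMean (fun ω => μY + (X ω - μX) ⬝ᵥ (γ⁻¹ • (SigXX⁻¹ *ᵥ SigXY))) = pMean Y ∧
    pVar (fun ω => μY + (X ω - μX) ⬝ᵥ (γ⁻¹ • (SigXX⁻¹ *ᵥ SigXY))) = pVar Y := by
  have hdet : IsUnit SigXX.det := isUnit_iff_ne_zero.mpr hPD.det_pos.ne'
  have hq : 0 < SigXY ⬝ᵥ (SigXX⁻¹ *ᵥ SigXY) := hPD.inv.dotProduct_mulVec_pos hne
  constructor
  · rw [pMean_const_add_dotProduct_sub X (fun j => (hX j).integrable one_le_two), ← hμX,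
      sub_self, zero_dotProduct, add_zero, hμY]
  · rw [pVar_const_add_dotProduct_sub X hX, ← hSigXX,
      Matrix.smul_inv_mulVec_dotProduct_mulVec hdet, hγ, inv_div_sqrt_sq_mul hq (pVar_nonneg Y)]

/-- The maximum agreement linear predictor
`Ỹ*(x) = μ_Y + (x−μ_X)·(1/γ)Σ_XX⁻¹Σ_XY` has the same mean and variance as `Y`. -/
theorem malp_mean_variance_match {Ω : Type*} [MeasureSpace Ω]
    [IsProbabilityMeasure (ℙ : Measure Ω)] {p : ℕ} (hp : 0 < p)
    (X : Ω → Fin p → ℝ) (Y : Ω → ℝ)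
    (hX : ∀ j, MemLp (fun ω => X ω j) 2 ℙ) (hY : MemLp Y 2 ℙ)
    (hvar : 0 < pVar Y)
    (μX : Fin p → ℝ) (hμX : μX = fun j => pMean (fun ω => X ω j))
    (μY : ℝ) (hμY : μY = pMean Y)
    (SigXX : Matrix (Fin p) (Fin p) ℝ)
    (hSigXX : SigXX = Matrix.of fun j l => pCov (fun ω => X ω j) (fun ω => X ω l))
    (hPD : SigXX.PosDef)
    (SigXY : Fin p → ℝ) (hSigXY : SigXY = fun j => pCov (fun ω => X ω j) Y)
    (hne : SigXY ≠ 0)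
    (γ : ℝ) (hγ : γ = Real.sqrt (SigXY ⬝ᵥ (SigXX⁻¹ *ᵥ SigXY)) / Real.sqrt (pVar Y)) :
    pMean (fun ω => μY + (X ω - μX) ⬝ᵥ (γ⁻¹ • (SigXX⁻¹ *ᵥ SigXY))) = pMean Y ∧
    pVar (fun ω => μY + (X ω - μX) ⬝ᵥ (γ⁻¹ • (SigXX⁻¹ *ᵥ SigXY))) = pVar Y :=
  malp_mean_variance_match_general X Y hX μX hμX μY hμY SigXX hSigXX hPD SigXY hne γ hγ
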